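/- arXiv:1901.03573 — 6 statements merged into one kernel-verified Lean document; each statement's English description precedes it below -/
import Mathlib

section
/- Let H̃ : ℝ^d × ℝ^d → ℝ be a polarised energy and ∇̄H̃ : ℝ^d × ℝ^d × ℝ^d → ℝ^d a polarised discrete gradient, i.e., H̃(y,z) - H̃(x,y) = (1/2)(z-x)ᵀ ∇̄H̃(x,y,z) for all x,y,z. Then for any skew-symmetric S and Δt > 0, the two-step scheme (x^{n+2} - x^n)/(2Δt) = S ∇̄H̃(x^n, x^{n+1}, x^{n+2}) preserves the polarised invariant: H̃(x^n, x^{n+1}) = H̃(x^0, x^1) for all n ≥ 0. -/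
/-!
Each step of the scheme moves from `(xₙ, xₙ₊₁)` to `(xₙ₊₁, xₙ₊₂)`, and the polarised discrete
gradient identity turns the resulting change of `H̃` into `½ (xₙ₊₂ - xₙ) ⬝ ∇̄H̃`. By the scheme this
is a multiple of `(S g) ⬝ g` with `g = ∇̄H̃(xₙ, xₙ₊₁, xₙ₊₂)`, which vanishes since `S` is skew.
-/

open Matrix

variable {ι K : Type*} [Fintype ι] [Field K]

namespace Matrix

theorem mulVec_dotProduct_self_of_transpose_eq_neg [CharZero K] {S : Matrix ι ι K}
    (hS : Sᵀ = -S) (v : ι → K) : (S *ᵥ v) ⬝ᵥ v = 0 := by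
  have h : (S *ᵥ v) ⬝ᵥ v = -((S *ᵥ v) ⬝ᵥ v) := by
    calc (S *ᵥ v) ⬝ᵥ v = v ⬝ᵥ (S *ᵥ v) := dotProduct_comm _ _
      _ = (Sᵀ *ᵥ v) ⬝ᵥ v := by rw [dotProduct_mulVec, mulVec_transpose]
      _ = -((S *ᵥ v) ⬝ᵥ v) := by rw [hS, neg_mulVec, neg_dotProduct]
  exact CharZero.eq_neg_self_iff.mp h

end Matrix

def IsPolarisedDiscreteGradient (Htil : (ι → K) → (ι → K) → K)
    (PDG : (ι → K) → (ι → K) → (ι → K) → (ι → K)) : Prop :=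
  ∀ x y z, Htil y z - Htil x y = (1 / 2 : K) * ((z - x) ⬝ᵥ PDG x y z)

theorem IsPolarisedDiscreteGradient.eq_of_sub_eq_smul_mulVec [CharZero K]
    {Htil : (ι → K) → (ι → K) → K} {PDG : (ι → K) → (ι → K) → (ι → K) → (ι → K)}
    (hPDG : IsPolarisedDiscreteGradient Htil PDG) {S : Matrix ι ι K} (hS : Sᵀ = -S)
    {x y z : ι → K} {c : K} (hstep : z - x = c • S *ᵥ PDG x y z) :
    Htil y z = Htil x y := by
  have hdiff := hPDG x y z
  rw [hstep, smul_dotProduct, mulVec_dotProduct_self_of_transpose_eq_neg hS,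
    smul_zero, mul_zero] at hdiff
  exact sub_eq_zero.mp hdiff

theorem stmt_2_general {d : ℕ} (S : Matrix (Fin d) (Fin d) ℝ) (hS : Sᵀ = -S)
    (Δt : ℝ)
    (Htil : (Fin d → ℝ) → (Fin d → ℝ) → ℝ)
    (PDG : (Fin d → ℝ) → (Fin d → ℝ) → (Fin d → ℝ) → (Fin d → ℝ))
    (hPDG : ∀ x y z : Fin d → ℝ,
      Htil y z - Htil x y = (1 / 2 : ℝ) * ((z - x) ⬝ᵥ PDG x y z))
    (x : ℕ → (Fin d → ℝ))
    (hscheme : ∀ n : ℕ,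
      x (n + 2) - x n = (2 * Δt) • S.mulVec (PDG (x n) (x (n + 1)) (x (n + 2)))) :
    ∀ n : ℕ, Htil (x n) (x (n + 1)) = Htil (x 0) (x 1) := by
  intro n
  induction n with
  | zero => rfl
  | succ n ih =>
    exact (IsPolarisedDiscreteGradient.eq_of_sub_eq_smul_mulVec hPDG hS (hscheme n)).trans ih

/-- The two-step polarised discrete gradient scheme preserves the polarised invariant. -/
theorem stmt_2 {d : ℕ} (S : Matrix (Fin d) (Fin d) ℝ) (hS : Sᵀ = -S)
    (Δt : ℝ) (hΔt : 0 < Δt)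
    (H : (Fin d → ℝ) → ℝ)
    (Htil : (Fin d → ℝ) → (Fin d → ℝ) → ℝ)
    (hpol₁ : ∀ x : Fin d → ℝ, Htil x x = H x)
    (hpol₂ : ∀ x y : Fin d → ℝ, Htil x y = Htil y x)
    (PDG : (Fin d → ℝ) → (Fin d → ℝ) → (Fin d → ℝ) → (Fin d → ℝ))
    (hPDG : ∀ x y z : Fin d → ℝ,
      Htil y z - Htil x y = (1 / 2 : ℝ) * ((z - x) ⬝ᵥ PDG x y z))
    (x : ℕ → (Fin d → ℝ))
    (hscheme : ∀ n : ℕ,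
      x (n + 2) - x n = (2 * Δt) • S.mulVec (PDG (x n) (x (n + 1)) (x (n + 2)))) :
    ∀ n : ℕ, Htil (x n) (x (n + 1)) = Htil (x 0) (x 1) :=
  stmt_2_general S hS Δt Htil PDG hPDG x hscheme
end

section
/- Let f(x) = S∇H(x) with H a homogeneous cubic polynomial and S skew-symmetric. Then -½f(x) + 2f((x+y)/2) - ½f(y) = (1/2) S H''(x) y for all x, y ∈ ℝ^d (where H''(x)y = H''(y)x), so that Kahan's method written in the Runge–Kutta form (x^{n+1} - x^n)/Δt = -½ f(x^n) + 2 f((x^n + x^{n+1})/2) - ½ f(x^{n+1}) is equivalent to the linearly implicit form (x^{n+1} - x^n)/Δt = ½ S H''(x^n) x^{n+1}. -/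
open Matrix

/-- For f(x) = S∇H(x) with H homogeneous cubic and S skew-symmetric, the
Runge–Kutta form of Kahan's method satisfies
-½f(x) + 2f((x+y)/2) - ½f(y) = ½ S H''(x) y. -/
theorem stmt_8 {d : ℕ} (S : Matrix (Fin d) (Fin d) ℝ) (hS : Sᵀ = -S)
    (Hess : (Fin d → ℝ) → Matrix (Fin d) (Fin d) ℝ)
    (hlin : IsLinearMap ℝ Hess)
    (hsymm : ∀ x y : Fin d → ℝ, (Hess x).mulVec y = (Hess y).mulVec x)
    (gradH : (Fin d → ℝ) → (Fin d → ℝ))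
    (hgrad : ∀ x : Fin d → ℝ, gradH x = (1 / 2 : ℝ) • (Hess x).mulVec x)
    (f : (Fin d → ℝ) → (Fin d → ℝ))
    (hf : ∀ x : Fin d → ℝ, f x = S.mulVec (gradH x)) :
    ∀ x y : Fin d → ℝ,
      -((1 / 2 : ℝ) • f x) + (2 : ℝ) • f ((1 / 2 : ℝ) • (x + y))
          - (1 / 2 : ℝ) • f y
        = (1 / 2 : ℝ) • S.mulVec ((Hess x).mulVec y) := by
  intro x y
  simp only [hf, hgrad, hlin.map_smul, hlin.map_add, Matrix.add_mulVec,
    Matrix.smul_mulVec, Matrix.mulVec_add, Matrix.mulVec_smul]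
  rw [hsymm y x]
  module
end

section
/- Let H be a homogeneous cubic polynomial on ℝ^d, S skew-symmetric, f(x) = S∇H(x), and Δt > 0. Suppose the sequence (x^n) satisfies Kahan's method (x^{n+1}-x^n)/Δt = -½f(x^n) + 2f((x^n+x^{n+1})/2) - ½f(x^{n+1}) for all n. Then it satisfies the two-step scheme (x^{n+2} - x^n)/(2Δt) = (1/4) S H''(x^{n+1})(x^n + x^{n+2}) for all n. -/
/-!
For a quadratic field `f x = ½ S H''(x) x`, the Kahan combination `-½ f a + 2 f ((a+b)/2) - ½ f b`
is the polarization of `f`, namely `½ S H''(a) b`; so one Kahan step reads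
`x' - x = (Δt/2) S H''(x) x'`. Adding two consecutive steps and using the symmetry
`H''(x) y = H''(y) x` to put `x^{n+1}` in the Hessian slot of both gives the two-step scheme.
-/

open Matrix

theorem kahan_combination_eq_mulVec_hessian {d : ℕ} (S : Matrix (Fin d) (Fin d) ℝ)
    {Hess : (Fin d → ℝ) → Matrix (Fin d) (Fin d) ℝ} (hlin : IsLinearMap ℝ Hess)
    (hsymm : ∀ x y : Fin d → ℝ, (Hess x) *ᵥ y = (Hess y) *ᵥ x)
    {f : (Fin d → ℝ) → (Fin d → ℝ)} (hf : ∀ x, f x = S *ᵥ ((1 / 2 : ℝ) • (Hess x) *ᵥ x))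
    (a b : Fin d → ℝ) :
    -((1 / 2 : ℝ) • f a) + (2 : ℝ) • f ((1 / 2 : ℝ) • (a + b)) - (1 / 2 : ℝ) • f b =
      (1 / 2 : ℝ) • S *ᵥ ((Hess a) *ᵥ b) := by
  simp only [hf, hlin.map_add, hlin.map_smul, add_mulVec, smul_mulVec, mulVec_add,
    mulVec_smul, hsymm b a, smul_add]
  module

theorem sub_eq_of_symmetric_one_step {M : Type*} [AddCommGroup M] (B : M → M → M)
    (hsymm : ∀ a b, B a b = B b a) (hadd : ∀ a b c, B a (b + c) = B a b + B a c)
    (x : ℕ → M) (hstep : ∀ n, x (n + 1) - x n = B (x n) (x (n + 1))) (n : ℕ) :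
    x (n + 2) - x n = B (x (n + 1)) (x n + x (n + 2)) := calc
  x (n + 2) - x n = (x (n + 1 + 1) - x (n + 1)) + (x (n + 1) - x n) := by abel
  _ = B (x (n + 1)) (x (n + 2)) + B (x n) (x (n + 1)) := by rw [hstep, hstep]
  _ = B (x (n + 1)) (x n + x (n + 2)) := by rw [hadd, hsymm (x n), add_comm]

theorem stmt_9_general {d : ℕ} (S : Matrix (Fin d) (Fin d) ℝ)
    (Δt : ℝ)
    (Hess : (Fin d → ℝ) → Matrix (Fin d) (Fin d) ℝ)
    (hlin : IsLinearMap ℝ Hess)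
    (hsymm : ∀ x y : Fin d → ℝ, (Hess x).mulVec y = (Hess y).mulVec x)
    (gradH : (Fin d → ℝ) → (Fin d → ℝ))
    (hgrad : ∀ x : Fin d → ℝ, gradH x = (1 / 2 : ℝ) • (Hess x).mulVec x)
    (f : (Fin d → ℝ) → (Fin d → ℝ))
    (hf : ∀ x : Fin d → ℝ, f x = S.mulVec (gradH x))
    (x : ℕ → (Fin d → ℝ))
    (hkahan : ∀ n : ℕ, x (n + 1) - x n =
      Δt • (-((1 / 2 : ℝ) • f (x n))
        + (2 : ℝ) • f ((1 / 2 : ℝ) • (x n + x (n + 1)))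
        - (1 / 2 : ℝ) • f (x (n + 1)))) :
    ∀ n : ℕ, x (n + 2) - x n =
      (2 * Δt) • ((1 / 4 : ℝ) •
        S.mulVec ((Hess (x (n + 1))).mulVec (x n + x (n + 2)))) := by
  set B : (Fin d → ℝ) → (Fin d → ℝ) → (Fin d → ℝ) := fun a b => (Δt / 2) • S *ᵥ (Hess a *ᵥ b)
  have hstep : ∀ n, x (n + 1) - x n = B (x n) (x (n + 1)) := fun n => by
    rw [hkahan, kahan_combination_eq_mulVec_hessian S hlin hsymm (fun y => by rw [hf, hgrad])]
    module
  intro n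
  rw [sub_eq_of_symmetric_one_step B (fun a b => by simp only [B, hsymm a b])
    (fun a b c => by simp only [B, mulVec_add, smul_add]) x hstep n]
  module

/-- A sequence generated by Kahan's method for ẋ = S∇H(x), H homogeneous cubic,
satisfies the two-step scheme (x^{n+2}-x^n)/(2Δt) = ¼ S H''(x^{n+1})(x^n + x^{n+2}). -/
theorem stmt_9 {d : ℕ} (S : Matrix (Fin d) (Fin d) ℝ) (hS : Sᵀ = -S)
    (Δt : ℝ) (hΔt : 0 < Δt)
    (Hess : (Fin d → ℝ) → Matrix (Fin d) (Fin d) ℝ)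
    (hlin : IsLinearMap ℝ Hess)
    (hsymm : ∀ x y : Fin d → ℝ, (Hess x).mulVec y = (Hess y).mulVec x)
    (gradH : (Fin d → ℝ) → (Fin d → ℝ))
    (hgrad : ∀ x : Fin d → ℝ, gradH x = (1 / 2 : ℝ) • (Hess x).mulVec x)
    (f : (Fin d → ℝ) → (Fin d → ℝ))
    (hf : ∀ x : Fin d → ℝ, f x = S.mulVec (gradH x))
    (x : ℕ → (Fin d → ℝ))
    (hkahan : ∀ n : ℕ, x (n + 1) - x n =
      Δt • (-((1 / 2 : ℝ) • f (x n))
        + (2 : ℝ) • f ((1 / 2 : ℝ) • (x n + x (n + 1)))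
        - (1 / 2 : ℝ) • f (x (n + 1)))) :
    ∀ n : ℕ, x (n + 2) - x n =
      (2 * Δt) • ((1 / 4 : ℝ) •
        S.mulVec ((Hess (x (n + 1))).mulVec (x n + x (n + 2)))) :=
  stmt_9_general S Δt Hess hlin hsymm gradH hgrad f hf x hkahan
end

section
/- Let H be a homogeneous cubic polynomial on ℝ^d, S skew-symmetric, Δt > 0. Suppose x^1 is obtained from x^0 by Kahan's method, and the sequence satisfies the two-step scheme (x^{n+2}-x^n)/(2Δt) = (1/4) S H''(x^{n+1})(x^n + x^{n+2}) for all n ≥ 0. Then x^{n+1} is obtained from x^n by Kahan's method for every n ≥ 0. -/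
/-!
For a homogeneous cubic `H`, Kahan's step from `a` to `b` collapses by polarization to the
linearly implicit step `b - a = (Δt/2) S H''(a) b`. Subtracting this step from `x⁰` to `x¹`
from the two-step scheme at `x¹`, and using `H''(x⁰) x¹ = H''(x¹) x⁰`, leaves exactly the
linearly implicit step from `x¹` to `x²`; induction does the rest.
-/

open Matrix

section Kahan

variable {ι : Type*} [Fintype ι]

noncomputable def kahanIncrement (f : (ι → ℝ) → ι → ℝ) (Δt : ℝ) (a b : ι → ℝ) : ι → ℝ :=
  Δt • (-((1 / 2 : ℝ) • f a) + (2 : ℝ) • f ((1 / 2 : ℝ) • (a + b)) - (1 / 2 : ℝ) • f b)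

variable (S : Matrix ι ι ℝ) {Hess : (ι → ℝ) → Matrix ι ι ℝ}

theorem kahanIncrement_eq_of_cubic (hlin : IsLinearMap ℝ Hess)
    (hsymm : ∀ x y : ι → ℝ, Hess x *ᵥ y = Hess y *ᵥ x)
    {f : (ι → ℝ) → ι → ℝ} (hf : ∀ x, f x = S *ᵥ ((1 / 2 : ℝ) • (Hess x *ᵥ x)))
    (Δt : ℝ) (a b : ι → ℝ) :
    kahanIncrement f Δt a b = (Δt / 2) • (S *ᵥ (Hess a *ᵥ b)) := by
  have hmid : Hess ((1 / 2 : ℝ) • (a + b)) = (1 / 2 : ℝ) • (Hess a + Hess b) := by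
    rw [hlin.map_smul, hlin.map_add]
  rw [kahanIncrement, hf, hf, hf, hmid]
  simp only [add_mulVec, mulVec_add, mulVec_smul, smul_mulVec, smul_add, hsymm b a]
  module

theorem linearlyImplicit_of_twoStep (Δt : ℝ)
    (hsymm : ∀ x y : ι → ℝ, Hess x *ᵥ y = Hess y *ᵥ x) {x : ℕ → ι → ℝ}
    (hfirst : x 1 - x 0 = (Δt / 2) • (S *ᵥ (Hess (x 0) *ᵥ x 1)))
    (hscheme : ∀ n : ℕ, x (n + 2) - x n =
      (2 * Δt) • ((1 / 4 : ℝ) • (S *ᵥ (Hess (x (n + 1)) *ᵥ (x n + x (n + 2)))))) :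
    ∀ n : ℕ, x (n + 1) - x n = (Δt / 2) • (S *ᵥ (Hess (x n) *ᵥ x (n + 1))) := by
  intro n
  induction n with
  | zero => exact hfirst
  | succ n ih =>
    calc x (n + 2) - x (n + 1) = (x (n + 2) - x n) - (x (n + 1) - x n) := by abel
      _ = (Δt / 2) • (S *ᵥ (Hess (x (n + 1)) *ᵥ x (n + 2))) := by
        rw [hscheme n, ih, hsymm (x n)]
        simp only [mulVec_add, smul_add]
        module

end Kahan

theorem stmt_10_general {d : ℕ} (S : Matrix (Fin d) (Fin d) ℝ)
    (Δt : ℝ)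
    (Hess : (Fin d → ℝ) → Matrix (Fin d) (Fin d) ℝ)
    (hlin : IsLinearMap ℝ Hess)
    (hsymm : ∀ x y : Fin d → ℝ, (Hess x).mulVec y = (Hess y).mulVec x)
    (gradH : (Fin d → ℝ) → (Fin d → ℝ))
    (hgrad : ∀ x : Fin d → ℝ, gradH x = (1 / 2 : ℝ) • (Hess x).mulVec x)
    (f : (Fin d → ℝ) → (Fin d → ℝ))
    (hf : ∀ x : Fin d → ℝ, f x = S.mulVec (gradH x))
    (x : ℕ → (Fin d → ℝ))
    (hfirst : x 1 - x 0 =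
      Δt • (-((1 / 2 : ℝ) • f (x 0))
        + (2 : ℝ) • f ((1 / 2 : ℝ) • (x 0 + x 1))
        - (1 / 2 : ℝ) • f (x 1)))
    (hscheme : ∀ n : ℕ, x (n + 2) - x n =
      (2 * Δt) • ((1 / 4 : ℝ) •
        S.mulVec ((Hess (x (n + 1))).mulVec (x n + x (n + 2))))) :
    ∀ n : ℕ, x (n + 1) - x n =
      Δt • (-((1 / 2 : ℝ) • f (x n))
        + (2 : ℝ) • f ((1 / 2 : ℝ) • (x n + x (n + 1)))
        - (1 / 2 : ℝ) • f (x (n + 1))) := by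
  have hkahan := kahanIncrement_eq_of_cubic S hlin hsymm
    (fun y => (hf y).trans (congrArg _ (hgrad y))) Δt
  have hstep := linearlyImplicit_of_twoStep S Δt hsymm
    ((hkahan (x 0) (x 1)) ▸ hfirst) hscheme
  exact fun n => (hstep n).trans (hkahan (x n) (x (n + 1))).symm

/-- If x¹ is obtained from x⁰ by Kahan's method and the sequence satisfies the
two-step scheme (x^{n+2}-x^n)/(2Δt) = ¼ S H''(x^{n+1})(x^n + x^{n+2}), then every
step is a step of Kahan's method. -/
theorem stmt_10 {d : ℕ} (S : Matrix (Fin d) (Fin d) ℝ) (hS : Sᵀ = -S)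
    (Δt : ℝ) (hΔt : 0 < Δt)
    (Hess : (Fin d → ℝ) → Matrix (Fin d) (Fin d) ℝ)
    (hlin : IsLinearMap ℝ Hess)
    (hsymm : ∀ x y : Fin d → ℝ, (Hess x).mulVec y = (Hess y).mulVec x)
    (gradH : (Fin d → ℝ) → (Fin d → ℝ))
    (hgrad : ∀ x : Fin d → ℝ, gradH x = (1 / 2 : ℝ) • (Hess x).mulVec x)
    (f : (Fin d → ℝ) → (Fin d → ℝ))
    (hf : ∀ x : Fin d → ℝ, f x = S.mulVec (gradH x))
    (x : ℕ → (Fin d → ℝ))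
    (hfirst : x 1 - x 0 =
      Δt • (-((1 / 2 : ℝ) • f (x 0))
        + (2 : ℝ) • f ((1 / 2 : ℝ) • (x 0 + x 1))
        - (1 / 2 : ℝ) • f (x 1)))
    (hscheme : ∀ n : ℕ, x (n + 2) - x n =
      (2 * Δt) • ((1 / 4 : ℝ) •
        S.mulVec ((Hess (x (n + 1))).mulVec (x n + x (n + 2))))) :
    ∀ n : ℕ, x (n + 1) - x n =
      Δt • (-((1 / 2 : ℝ) • f (x n))
        + (2 : ℝ) • f ((1 / 2 : ℝ) • (x n + x (n + 1)))
        - (1 / 2 : ℝ) • f (x (n + 1))) :=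
  stmt_10_general S Δt Hess hlin hsymm gradH hgrad f hf x hfirst hscheme
end

section
/- Consequently, for H homogeneous cubic and S skew-symmetric, the PDG scheme (x^{n+2}-x^n)/(2Δt) = S∇̄H̃(x^n,x^{n+1},x^{n+2}) with H̃(x,y) = (1/6)xᵀH''((x+y)/2)y and ∇̄H̃(x,y,z) = 2∇_x H̃((x+z)/2,y) is exactly the scheme (x^{n+2}-x^n)/(2Δt) = (1/6) S H''(x^{n+1})(x^n + x^{n+1} + x^{n+2}). -/
open Matrix

/-- Symmetry `H''(x) y = H''(y) x` moves the midpoint `x + z` out of the Hessian's argument. -/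
lemma smul_hess_midpoint_mulVec {n : Type*} [Fintype n]
    (Hess : (n → ℝ) → Matrix n n ℝ) (hsymm : ∀ x y : n → ℝ, Hess x *ᵥ y = Hess y *ᵥ x)
    (x y z : n → ℝ) :
    (2 : ℝ) • ((1 / 12 : ℝ) • Hess ((2 : ℝ) • ((1 / 2 : ℝ) • (x + z)) + y) *ᵥ y) =
      (1 / 6 : ℝ) • Hess y *ᵥ (x + y + z) := by
  have hmid : (2 : ℝ) • ((1 / 2 : ℝ) • (x + z)) = x + z := by
    rw [smul_smul]; norm_num
  rw [hmid, hsymm, smul_smul, add_right_comm]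
  norm_num

theorem stmt_15_general {d : ℕ} (S : Matrix (Fin d) (Fin d) ℝ)
    (Δt : ℝ)
    (Hess : (Fin d → ℝ) → Matrix (Fin d) (Fin d) ℝ)
    (hsymm : ∀ x y : Fin d → ℝ, (Hess x).mulVec y = (Hess y).mulVec x)
    (gradx : (Fin d → ℝ) → (Fin d → ℝ) → (Fin d → ℝ))
    (hgradx : ∀ x y : Fin d → ℝ,
      gradx x y = (1 / 12 : ℝ) • (Hess ((2 : ℝ) • x + y)).mulVec y)
    (PDG : (Fin d → ℝ) → (Fin d → ℝ) → (Fin d → ℝ) → (Fin d → ℝ))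
    (hPDG : ∀ x y z : Fin d → ℝ,
      PDG x y z = (2 : ℝ) • gradx ((1 / 2 : ℝ) • (x + z)) y)
    (x : ℕ → (Fin d → ℝ)) :
    (∀ n : ℕ, x (n + 2) - x n =
        (2 * Δt) • S.mulVec (PDG (x n) (x (n + 1)) (x (n + 2)))) ↔
    (∀ n : ℕ, x (n + 2) - x n =
        (2 * Δt) • ((1 / 6 : ℝ) •
          S.mulVec ((Hess (x (n + 1))).mulVec (x n + x (n + 1) + x (n + 2))))) := by
  have hPDG_eq : ∀ a b c, PDG a b c = (1 / 6 : ℝ) • Hess b *ᵥ (a + b + c) := fun a b c => by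
    rw [hPDG, hgradx, smul_hess_midpoint_mulVec Hess hsymm]
  refine forall_congr' fun n => ?_
  rw [hPDG_eq, mulVec_smul]

/-- The PDG scheme with H̃(x,y) = (1/6)xᵀH''((x+y)/2)y and
∇̄H̃(x,y,z) = 2∇ₓH̃((x+z)/2,y) is exactly the scheme
(x^{n+2}-x^n)/(2Δt) = (1/6) S H''(x^{n+1})(x^n + x^{n+1} + x^{n+2}). -/
theorem stmt_15 {d : ℕ} (S : Matrix (Fin d) (Fin d) ℝ) (hS : Sᵀ = -S)
    (Δt : ℝ) (hΔt : 0 < Δt)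
    (Hess : (Fin d → ℝ) → Matrix (Fin d) (Fin d) ℝ)
    (hlin : IsLinearMap ℝ Hess)
    (hsm : ∀ m : Fin d → ℝ, (Hess m).IsSymm)
    (hsymm : ∀ x y : Fin d → ℝ, (Hess x).mulVec y = (Hess y).mulVec x)
    (gradx : (Fin d → ℝ) → (Fin d → ℝ) → (Fin d → ℝ))
    (hgradx : ∀ x y : Fin d → ℝ,
      gradx x y = (1 / 12 : ℝ) • (Hess ((2 : ℝ) • x + y)).mulVec y)
    (PDG : (Fin d → ℝ) → (Fin d → ℝ) → (Fin d → ℝ) → (Fin d → ℝ))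
    (hPDG : ∀ x y z : Fin d → ℝ,
      PDG x y z = (2 : ℝ) • gradx ((1 / 2 : ℝ) • (x + z)) y)
    (x : ℕ → (Fin d → ℝ)) :
    (∀ n : ℕ, x (n + 2) - x n =
        (2 * Δt) • S.mulVec (PDG (x n) (x (n + 1)) (x (n + 2)))) ↔
    (∀ n : ℕ, x (n + 2) - x n =
        (2 * Δt) • ((1 / 6 : ℝ) •
          S.mulVec ((Hess (x (n + 1))).mulVec (x n + x (n + 1) + x (n + 2))))) :=
  stmt_15_general S Δt Hess hsymm gradx hgradx PDG hPDG x
end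

section
/- The implicit midpoint rule (x^{n+1}-x^n)/Δt = f((x^n+x^{n+1})/2) applied over two consecutive steps to ẋ = S∇H(x) with H homogeneous cubic yields (x^{n+2}-x^n)/(2Δt) = S[ (1/16)H''(x^n)x^n + (1/8)H''(x^{n+1})(x^n + x^{n+1} + x^{n+2}) + (1/16)H''(x^{n+2})x^{n+2} ]. -/
/-!
Because `H''` is linear and symmetric in the sense `H''(x)y = H''(y)x`, the quadratic form
`v ↦ H''(v)v` expands over a midpoint as
`H''(m)m = ¼ (H''(a)a + 2 H''(a)b + H''(b)b)` with `m = ½(a + b)`. Each midpoint step is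
therefore explicit in the two endpoints, and adding two consecutive steps, with the cross term
`H''(xⁿ)xⁿ⁺¹` traded for `H''(xⁿ⁺¹)xⁿ`, gives the stated three-point formula.
-/

open Matrix

section Quadratic

variable {K ι : Type*} [Field K] [Fintype ι] (Hess : (ι → K) → Matrix ι ι K)

theorem mulVec_add_self_of_isLinearMap (hlin : IsLinearMap K Hess) {a b : ι → K}
    (hab : Hess b *ᵥ a = Hess a *ᵥ b) :
    Hess (a + b) *ᵥ (a + b) = Hess a *ᵥ a + (2 : K) • Hess a *ᵥ b + Hess b *ᵥ b := by
  rw [hlin.map_add, add_mulVec, mulVec_add, mulVec_add, hab]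
  module

theorem half_mulVec_midpoint_of_isLinearMap (hlin : IsLinearMap K Hess) {a b : ι → K}
    (hab : Hess b *ᵥ a = Hess a *ᵥ b) :
    (1 / 2 : K) • Hess ((1 / 2 : K) • (a + b)) *ᵥ ((1 / 2 : K) • (a + b)) =
      (1 / 8 : K) • (Hess a *ᵥ a + (2 : K) • Hess a *ᵥ b + Hess b *ᵥ b) := by
  have eighth : (1 / 8 : K) = (1 / 2) ^ 3 := by rw [div_pow]; norm_num
  rw [hlin.map_smul, smul_mulVec, mulVec_smul, mulVec_add_self_of_isLinearMap Hess hlin hab,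
    eighth]
  module

end Quadratic

theorem stmt_19_general {d : ℕ} (S : Matrix (Fin d) (Fin d) ℝ)
    (Δt : ℝ)
    (Hess : (Fin d → ℝ) → Matrix (Fin d) (Fin d) ℝ)
    (hlin : IsLinearMap ℝ Hess)
    (hsymm : ∀ x y : Fin d → ℝ, (Hess x).mulVec y = (Hess y).mulVec x)
    (gradH : (Fin d → ℝ) → (Fin d → ℝ))
    (hgrad : ∀ x : Fin d → ℝ, gradH x = (1 / 2 : ℝ) • (Hess x).mulVec x)
    (f : (Fin d → ℝ) → (Fin d → ℝ))
    (hf : ∀ x : Fin d → ℝ, f x = S.mulVec (gradH x))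
    (x : ℕ → (Fin d → ℝ))
    (hmid : ∀ n : ℕ, x (n + 1) - x n =
      Δt • f ((1 / 2 : ℝ) • (x n + x (n + 1)))) :
    ∀ n : ℕ, x (n + 2) - x n =
      (2 * Δt) • S.mulVec
        ((1 / 16 : ℝ) • (Hess (x n)).mulVec (x n)
          + (1 / 8 : ℝ) • (Hess (x (n + 1))).mulVec (x n + x (n + 1) + x (n + 2))
          + (1 / 16 : ℝ) • (Hess (x (n + 2))).mulVec (x (n + 2))) := by
  intro n
  have step (k : ℕ) : x (k + 1) - x k = (Δt / 8) • S *ᵥ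
      (Hess (x k) *ᵥ x k + (2 : ℝ) • Hess (x k) *ᵥ x (k + 1) + Hess (x (k + 1)) *ᵥ x (k + 1)) := by
    rw [hmid, hf, hgrad, half_mulVec_midpoint_of_isLinearMap Hess hlin (hsymm _ _), mulVec_smul,
      smul_smul, mul_one_div]
  have two_steps : x (n + 2) - x n = (x (n + 1) - x n) + (x (n + 2) - x (n + 1)) := by abel
  rw [two_steps, step n, step (n + 1), hsymm (x n) (x (n + 1))]
  simp only [mulVec_add, mulVec_smul]
  module

/-- The implicit midpoint rule over two consecutive steps applied to ẋ = S∇H(x)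
with H homogeneous cubic yields
(x^{n+2}-x^n)/(2Δt) = S[(1/16)H''(x^n)x^n + (1/8)H''(x^{n+1})(x^n+x^{n+1}+x^{n+2})
+ (1/16)H''(x^{n+2})x^{n+2}]. -/
theorem stmt_19 {d : ℕ} (S : Matrix (Fin d) (Fin d) ℝ) (hS : Sᵀ = -S)
    (Δt : ℝ) (hΔt : 0 < Δt)
    (Hess : (Fin d → ℝ) → Matrix (Fin d) (Fin d) ℝ)
    (hlin : IsLinearMap ℝ Hess)
    (hsymm : ∀ x y : Fin d → ℝ, (Hess x).mulVec y = (Hess y).mulVec x)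
    (gradH : (Fin d → ℝ) → (Fin d → ℝ))
    (hgrad : ∀ x : Fin d → ℝ, gradH x = (1 / 2 : ℝ) • (Hess x).mulVec x)
    (f : (Fin d → ℝ) → (Fin d → ℝ))
    (hf : ∀ x : Fin d → ℝ, f x = S.mulVec (gradH x))
    (x : ℕ → (Fin d → ℝ))
    (hmid : ∀ n : ℕ, x (n + 1) - x n =
      Δt • f ((1 / 2 : ℝ) • (x n + x (n + 1)))) :
    ∀ n : ℕ, x (n + 2) - x n =
      (2 * Δt) • S.mulVec
        ((1 / 16 : ℝ) • (Hess (x n)).mulVec (x n)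
          + (1 / 8 : ℝ) • (Hess (x (n + 1))).mulVec (x n + x (n + 1) + x (n + 2))
          + (1 / 16 : ℝ) • (Hess (x (n + 2))).mulVec (x (n + 2))) :=
  stmt_19_general S Δt Hess hlin hsymm gradH hgrad f hf x hmid
end
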